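/- Let G = (V,E) be a graph with edge weights in {0,1}. Let E_0 be the edges of weight 0, V_0 the set of vertices incident to some edge of E_0, V_1 = V \ V_0, and let G_1 be the subgraph induced on V_1. If k is the number of connected components of the subgraph (V_0, E_0) and M is a maximum matching of G_1, then every forest cover of G has weighted index at least k + |M|. -/

import Mathlib

/-!
Delete the weight-one edges from `F[S]`. Each deletion creates at most one new component, so
the resulting graph `H` has at most `wi(F)` components. The remaining edges have weight zero, so
every component of `H` lies inside a component of `(V₀, E₀)` or is a single vertex of `V₁`.
Since `S` covers every edge, each component of `(V₀, E₀)` meets `S`, and each edge of `M` has an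
endpoint in `S ∩ V₁`, distinct edges giving distinct endpoints. These `k + |M|` vertices lie in
pairwise distinct components of `H`.
-/

open Function

namespace SimpleGraph

variable {V : Type*} {G : SimpleGraph V}

lemma Reachable.eq_of_forall_adj {β : Type*} {f : V → β} (hf : ∀ a b, G.Adj a b → f a = f b)
    {a b : V} (h : G.Reachable a b) : f a = f b := by
  rw [reachable_iff_reflTransGen] at h
  induction h with
  | refl => rfl
  | tail _ hbc ih => exact ih.trans (hf _ _ hbc)

lemma Reachable.deleteEdges_singleton_or (u v : V) {x y : V} (h : G.Reachable x y) :
    (G.deleteEdges {s(u, v)}).Reachable x y ∨ (G.deleteEdges {s(u, v)}).Reachable x u ∨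
      (G.deleteEdges {s(u, v)}).Reachable x v := by
  obtain ⟨p⟩ := h
  induction p with
  | nil => exact .inl .rfl
  | @cons a b _ hab _ ih =>
    by_cases he : s(a, b) = s(u, v)
    · rcases Sym2.eq_iff.mp he with ⟨rfl, -⟩ | ⟨rfl, -⟩
      · exact .inr (.inl .rfl)
      · exact .inr (.inr .rfl)
    · have hab' : (G.deleteEdges {s(u, v)}).Adj a b := by simpa [deleteEdges_adj, hab] using he
      exact ih.imp (hab'.reachable.trans ·)
        (Or.imp (hab'.reachable.trans ·) (hab'.reachable.trans ·))

lemma Reachable.deleteEdges_singleton {u v x y : V} (h : G.Reachable x y)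
    (hx : ¬(G.deleteEdges {s(u, v)}).Reachable x v)
    (hy : ¬(G.deleteEdges {s(u, v)}).Reachable y v) :
    (G.deleteEdges {s(u, v)}).Reachable x y := by
  rcases h.deleteEdges_singleton_or u v with hxy | hxu | hxv
  · exact hxy
  · rcases h.symm.deleteEdges_singleton_or u v with hyx | hyu | hyv
    · exact hyx.symm
    · exact hxu.trans hyu.symm
    · exact absurd hyv hy
  · exact absurd hxv hx

/-- Away from the component of `v`, deleting `s(u, v)` does not split any component. -/
theorem card_connectedComponent_deleteEdges_singleton_le [Finite V] (G : SimpleGraph V)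
    (e : Sym2 V) :
    Nat.card (G.deleteEdges {e}).ConnectedComponent ≤ Nat.card G.ConnectedComponent + 1 := by
  classical
  induction e with | h u v =>
  set G' := G.deleteEdges {s(u, v)}
  let Φ : G'.ConnectedComponent → Option G.ConnectedComponent := fun c =>
    if c = G'.connectedComponentMk v then none else some (c.map (Hom.ofLE (deleteEdges_le _)))
  have hΦ : Injective Φ := by
    intro c₁ c₂ h
    induction c₁ using ConnectedComponent.ind with | h x =>
    induction c₂ using ConnectedComponent.ind with | h y =>
    by_cases hx : G'.connectedComponentMk x = G'.connectedComponentMk v <;>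
      by_cases hy : G'.connectedComponentMk y = G'.connectedComponentMk v <;>
      simp only [Φ, hx, hy, if_true, if_false, reduceCtorEq] at h
    · exact hx.trans hy.symm
    · rw [ConnectedComponent.eq] at hx hy ⊢
      simp only [Option.some.injEq] at h
      exact (ConnectedComponent.exact h).deleteEdges_singleton hx hy
  simpa [Finite.card_option] using Nat.card_le_card_of_injective Φ hΦ

theorem card_connectedComponent_deleteEdges_le [Finite V] (G : SimpleGraph V)
    (D : Set (Sym2 V)) :
    Nat.card (G.deleteEdges D).ConnectedComponent ≤ Nat.card G.ConnectedComponent + D.ncard := by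
  induction D, D.toFinite using Set.Finite.induction_on with
  | empty => simp
  | @insert e D he hD ih =>
    rw [Set.ncard_insert_of_notMem he hD, Set.insert_eq, Set.union_comm,
      ← deleteEdges_deleteEdges]
    grw [card_connectedComponent_deleteEdges_singleton_le, ih]
    omega

lemma ncard_edgeSet_induce_inter_le [Finite V] (G : SimpleGraph V) (s : Set V)
    (P : Sym2 V → Prop) :
    ((G.induce s).edgeSet ∩ {e | P (e.map Subtype.val)}).ncard ≤
      Nat.card {e : Sym2 V // e ∈ G.edgeSet ∧ P e} := by
  rw [← Nat.card_coe_set_eq]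
  refine Nat.card_le_card_of_injective (fun e => ⟨e.1.map Subtype.val, ?_, e.2.2⟩) ?_
  · obtain ⟨e, he, -⟩ := e
    induction e with | h a b => exact he
  · exact fun e₁ e₂ h =>
      Subtype.ext (Sym2.map.injective Subtype.val_injective (congrArg Subtype.val h))

lemma Subgraph.IsMatching.injective_of_mem {M : G.Subgraph} (hM : M.IsMatching)
    {f : M.edgeSet → V} (hf : ∀ e : M.edgeSet, f e ∈ (e : Sym2 V)) : Injective f := by
  have hfM : ∀ e, f e ∈ M.verts := fun e => M.mem_verts_of_mem_edge e.2 (hf e)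
  have htoEdge : ∀ e, hM.toEdge ⟨f e, hfM e⟩ = e := fun e => by
    have hadj : M.Adj (f e) (Sym2.Mem.other (hf e)) := by
      rw [← Subgraph.mem_edgeSet, Sym2.other_spec]; exact e.2
    rw [hM.toEdge_eq_of_adj hadj]
    exact Subtype.ext (Sym2.other_spec (hf e))
  intro e₁ e₂ h
  rw [← htoEdge e₁, ← htoEdge e₂]
  congr

theorem card_connectedComponent_induce_support_add_card_le {ι : Type*} {G₀ : SimpleGraph V}
    {S : Set V} [Finite S] {H : SimpleGraph S} (hH : H ≤ G₀.induce S)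
    (hS : ∀ u v, G₀.Adj u v → u ∈ S ∨ v ∈ S) {f : ι → S} (hf : Injective f)
    (hf₀ : ∀ i, (f i : V) ∉ G₀.support) :
    Nat.card (G₀.induce G₀.support).ConnectedComponent + Nat.card ι ≤
      Nat.card H.ConnectedComponent := by
  classical
  set C := G₀.induce G₀.support
  let ζ : V → C.ConnectedComponent ⊕ V := fun x =>
    if hx : x ∈ G₀.support then .inl (C.connectedComponentMk ⟨x, hx⟩) else .inr x
  have hζ_adj : ∀ x y, G₀.Adj x y → ζ x = ζ y := by
    intro x y hxy
    have hx : x ∈ G₀.support := ⟨y, hxy⟩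
    have hy : y ∈ G₀.support := ⟨x, hxy.symm⟩
    simp only [ζ, dif_pos hx, dif_pos hy]
    exact congrArg _ (ConnectedComponent.connectedComponentMk_eq_of_adj hxy)
  let ζH : H.ConnectedComponent → C.ConnectedComponent ⊕ V :=
    ConnectedComponent.lift (ζ ∘ Subtype.val) fun a b p _ =>
      (p.reachable.map ((Embedding.induce S).toHom.comp (Hom.ofLE hH))).eq_of_forall_adj hζ_adj
  have hcover : ∀ c : C.ConnectedComponent, ∃ x : S, ζ x = .inl c := by
    intro c
    induction c using ConnectedComponent.ind with | h x =>
    obtain ⟨y, hxy⟩ := x.2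
    rcases hS _ _ hxy with hxS | hyS
    · exact ⟨⟨x, hxS⟩, by simp [ζ, x.2]⟩
    · exact ⟨⟨y, hyS⟩, (hζ_adj _ _ hxy).symm.trans (by simp [ζ, x.2])⟩
  choose rep hrep using hcover
  let ι' : C.ConnectedComponent ⊕ ι → H.ConnectedComponent :=
    Sum.elim (fun c => H.connectedComponentMk (rep c)) (fun i => H.connectedComponentMk (f i))
  have hζι' : ζH ∘ ι' = Sum.map id (Subtype.val ∘ f) := by
    funext x
    rcases x with c | i
    · exact hrep c
    · exact dif_neg (hf₀ i)
  have hι' : Injective ι' :=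
    .of_comp (f := ζH) (hζι' ▸ injective_id.sumMap (Subtype.val_injective.comp hf))
  have : Finite ι := .of_injective f hf
  have : Finite C.ConnectedComponent := .of_injective _ (hι'.comp Sum.inl_injective)
  rw [← Nat.card_sum]
  exact Nat.card_le_card_of_injective ι' hι'

end SimpleGraph

open SimpleGraph

theorem stmt_3_general {V : Type} [Fintype V] (G : SimpleGraph V) (w : Sym2 V → ℕ)
    (hw : ∀ e, w e = 0 ∨ w e = 1)
    (G0 : SimpleGraph V) (hG0 : ∀ u v, G0.Adj u v ↔ (G.Adj u v ∧ w s(u, v) = 0))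
    (k : ℕ) (hk : k = Nat.card (G0.induce G0.support).ConnectedComponent)
    (M : G.Subgraph) (hMmatch : M.IsMatching)
    (hMV1 : ∀ v ∈ M.verts, v ∉ G0.support) :
    ∀ (S : Finset V) (F : SimpleGraph V),
      F ≤ G → F.IsAcyclic →
      (∀ u v, F.Adj u v → u ∈ S ∧ v ∈ S) →
      (∀ u v, G.Adj u v → u ∈ S ∨ v ∈ S) →
      k + Nat.card M.edgeSet ≤
        Nat.card {e : Sym2 V // e ∈ F.edgeSet ∧ w e = 1} +
          Nat.card (F.induce (↑S : Set V)).ConnectedComponent := by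
  intro S F hFG _ _ hcov
  set H := F.induce (S : Set V)
  set D : Set (Sym2 S) := H.edgeSet ∩ {e | w (e.map Subtype.val) = 1}
  have hH₀ : H.deleteEdges D ≤ G0.induce (S : Set V) := by
    intro a b hab
    obtain ⟨hab, hD⟩ := deleteEdges_adj.mp hab
    have hw₁ : w s((a : V), b) ≠ 1 := fun h => hD ⟨hab, h⟩
    exact (hG0 _ _).2 ⟨hFG hab, (hw _).resolve_right hw₁⟩
  have hcov₀ : ∀ u v, G0.Adj u v → u ∈ S ∨ v ∈ S := fun u v huv =>
    hcov u v ((hG0 u v).1 huv).1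
  have hM_cov : ∀ e : M.edgeSet, ∃ x ∈ (e : Sym2 V), x ∈ S := by
    rintro ⟨e, he⟩
    induction e with | h a b =>
    rcases hcov a b (M.adj_sub he) with ha | hb
    · exact ⟨a, Sym2.mem_mk_left a b, ha⟩
    · exact ⟨b, Sym2.mem_mk_right a b, hb⟩
  choose f hfe hfS using hM_cov
  calc k + Nat.card M.edgeSet ≤ Nat.card (H.deleteEdges D).ConnectedComponent :=
        hk ▸ card_connectedComponent_induce_support_add_card_le hH₀ hcov₀
          (f := fun e => ⟨f e, hfS e⟩)
          (.of_comp (f := Subtype.val) (hMmatch.injective_of_mem hfe))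
          fun e => hMV1 _ (M.mem_verts_of_mem_edge e.2 (hfe e))
    _ ≤ Nat.card H.ConnectedComponent + D.ncard := card_connectedComponent_deleteEdges_le H D
    _ ≤ _ := by
        rw [add_comm]
        gcongr
        exact F.ncard_edgeSet_induce_inter_le _ (w · = 1)

/-- Binary edge weights: with G0 the subgraph of weight-0 edges, k the number
of components of (V_0, E_0), and M a maximum matching of the induced subgraph
on V_1 = V \ V_0, every forest cover of G has weighted index at least k + |M|.
(The weighted index of a forest cover (S, F) is the number of weight-1 edges of
F plus the number of connected components of F on S.) -/
theorem stmt_3 {V : Type} [Fintype V] (G : SimpleGraph V) (w : Sym2 V → ℕ)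
    (hw : ∀ e, w e = 0 ∨ w e = 1)
    (G0 : SimpleGraph V) (hG0 : ∀ u v, G0.Adj u v ↔ (G.Adj u v ∧ w s(u, v) = 0))
    (k : ℕ) (hk : k = Nat.card (G0.induce G0.support).ConnectedComponent)
    (M : G.Subgraph) (hMmatch : M.IsMatching)
    (hMV1 : ∀ v ∈ M.verts, v ∉ G0.support)
    (hMmax : ∀ M' : G.Subgraph, M'.IsMatching → (∀ v ∈ M'.verts, v ∉ G0.support) →
      Nat.card M'.edgeSet ≤ Nat.card M.edgeSet) :
    ∀ (S : Finset V) (F : SimpleGraph V),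
      F ≤ G → F.IsAcyclic →
      (∀ u v, F.Adj u v → u ∈ S ∧ v ∈ S) →
      (∀ u v, G.Adj u v → u ∈ S ∨ v ∈ S) →
      k + Nat.card M.edgeSet ≤
        Nat.card {e : Sym2 V // e ∈ F.edgeSet ∧ w e = 1} +
          Nat.card (F.induce (↑S : Set V)).ConnectedComponent :=
  stmt_3_general G w hw G0 hG0 k hk M hMmatch hMV1
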